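/- For every $i\in\{0,\dots,i(n)-1\}$, the retraction $\Psi_{n,i}:M_n\to D_{n-1,i}$ is $(3\lambda+2)(3\lambda^2+6\lambda+11)$-Lipschitz. -/

import Mathlib

open Set

noncomputable section

variable {Γ : Type*} [TopologicalSpace Γ] [DiscreteTopology Γ]

/-- `ℓ∞(Γ)`: the Banach space of bounded real functions on `Γ`
(carrying the discrete topology, so that boundedness is the only constraint). -/
abbrev Linf (Γ : Type*) [TopologicalSpace Γ] [DiscreteTopology Γ] : Type _ :=
  BoundedContinuousFunction Γ ℝ

/-- The entire part of a real number, toward `0`: `[r] = sign(r)⌊|r|⌋`. -/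
def ent (r : ℝ) : ℝ := Real.sign r * ⌊|r|⌋

lemma abs_ent_le (r : ℝ) : |ent r| ≤ |r| := by
  have hsign : |Real.sign r| ≤ 1 := by
    rcases lt_trichotomy r 0 with h | h | h
    · rw [Real.sign_of_neg h]; norm_num
    · rw [h, Real.sign_zero]; norm_num
    · rw [Real.sign_of_pos h]; norm_num
  have hfl : |(⌊|r|⌋ : ℝ)| ≤ |r| := by
    rw [abs_of_nonneg (by exact_mod_cast Int.floor_nonneg.mpr (abs_nonneg r))]
    exact Int.floor_le _
  calc |ent r| = |Real.sign r| * |(⌊|r|⌋ : ℝ)| := abs_mul _ _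
    _ ≤ 1 * |r| := mul_le_mul hsign hfl (abs_nonneg _) zero_le_one
    _ = |r| := one_mul _

/-- The coordinatewise quantization `f : ℓ∞(S) → ℓ∞(S)`, `f(x)(γ) = [x(γ)]`. -/
def quant (x : Linf Γ) : Linf Γ :=
  BoundedContinuousFunction.ofNormedAddCommGroup (fun γ => ent (x γ))
    continuous_of_discreteTopology ‖x‖ (fun γ => by
      rw [Real.norm_eq_abs]
      exact (abs_ent_le (x γ)).trans (by simpa using x.norm_coe_le_norm γ))

/-- Scalar truncation at level `s`. -/
def truncFun (s t : ℝ) : ℝ := if |t| ≤ s then t else s * t / |t|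

lemma abs_truncFun_le (s t : ℝ) : |truncFun s t| ≤ max |s| |t| := by
  unfold truncFun
  split_ifs with h
  · exact le_max_right _ _
  · by_cases ht : t = 0
    · simp [ht]
    · have hst : abs (s * t / |t|) = |s| := by
        rw [abs_div, abs_mul, abs_abs, mul_div_assoc, div_self (abs_ne_zero.mpr ht), mul_one]
      rw [hst]; exact le_max_left _ _

/-- The truncation of radius `s`: `T_s(x)(γ) = x(γ)` if `|x(γ)| ≤ s`,
and `= s·x(γ)/|x(γ)|` otherwise. -/
def trunc (s : ℝ) (x : Linf Γ) : Linf Γ :=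
  BoundedContinuousFunction.ofNormedAddCommGroup (fun γ => truncFun s (x γ))
    continuous_of_discreteTopology (max |s| ‖x‖) (fun γ => by
      rw [Real.norm_eq_abs]
      exact (abs_truncFun_le s (x γ)).trans
        (max_le_max le_rfl (by simpa using x.norm_coe_le_norm γ)))

/-- The restriction operator `r_S : ℓ∞(Γ) → ℓ∞(S)`, where `ℓ∞(S)` is identified
isometrically with the subspace of `ℓ∞(Γ)` of functions vanishing off `S`. -/
def restr (S : Set Γ) (x : Linf Γ) : Linf Γ :=
  BoundedContinuousFunction.ofNormedAddCommGroup (S.indicator x)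
    continuous_of_discreteTopology ‖x‖ (fun γ => by
      rw [Real.norm_eq_abs]
      by_cases h : γ ∈ S
      · rw [Set.indicator_of_mem h]
        simpa using x.norm_coe_le_norm γ
      · rw [Set.indicator_of_notMem h]
        simp)

/-- The ball `s·B_{ℓ∞(S)}`, viewed inside `ℓ∞(Γ)`: functions supported on `S`
of norm at most `s`. -/
def suppBall (S : Set Γ) (s : ℝ) : Set (Linf Γ) :=
  {x | (∀ γ ∉ S, x γ = 0) ∧ ‖x‖ ≤ s}

/-- `chain T a b = T (a+1) ∘ ⋯ ∘ T b` (the identity if `b ≤ a`). -/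
def chain {α : Type*} (T : ℕ → α → α) (a b : ℕ) : α → α :=
  Nat.rec id (fun k ih => ih ∘ T (a + k + 1)) (b - a)

/-- Bourgain–Delbaen data on `Γ`: a strictly increasing sequence of nonempty finite
sets `Γs n` (for `n ≥ 1`) with union `Γ`, together with compatible bounded linear
extension operators `i n : ℓ∞(Γ_n) → ℓ∞(Γ)` (realized as operators on `ℓ∞(Γ)`
factoring through the restriction `restr (Γs n)`), with norms bounded by the
positive integer `lam`. -/
structure BD (Γ : Type*) [TopologicalSpace Γ] [DiscreteTopology Γ] where
  Γs : ℕ → Set Γ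
  lam : ℕ
  i : ℕ → Linf Γ →L[ℝ] Linf Γ
  one_le_lam : 1 ≤ lam
  finite : ∀ n, 1 ≤ n → (Γs n).Finite
  nonempty : ∀ n, 1 ≤ n → (Γs n).Nonempty
  ssubset : ∀ n, 1 ≤ n → Γs n ⊂ Γs (n + 1)
  iUnion_eq : ⋃ n ∈ {k : ℕ | 1 ≤ k}, Γs n = Set.univ
  extension : ∀ n, 1 ≤ n → ∀ x : Linf Γ, ∀ γ ∈ Γs n, i n x γ = x γ
  factor : ∀ n, 1 ≤ n → ∀ x : Linf Γ, i n (restr (Γs n) x) = i n x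
  compatible : ∀ n m, 1 ≤ n → n < m → ∀ x : Linf Γ, i m (restr (Γs m) (i n x)) = i n x
  norm_i_le : ∀ n, 1 ≤ n → ‖i n‖ ≤ (lam : ℝ)

namespace BD

/-- `s n = λ^n`. -/
def s (B : BD Γ) (n : ℕ) : ℝ := (B.lam : ℝ) ^ n

/-- The sets `M_n` (with `M_0 = ∅`):
`M_n = M_{n-1} ∪ (f ∘ i_n)(f(s_n B_{ℓ∞(Γ_n)}) \ r_n(M_{n-1}))`. -/
def M (B : BD Γ) : ℕ → Set (Linf Γ)
  | 0 => ∅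
  | n + 1 =>
      M B n ∪
        (fun z => quant (B.i (n + 1) z)) ''
          (quant '' suppBall (B.Γs (n + 1)) (B.s (n + 1)) \ restr (B.Γs (n + 1)) '' M B n)

/-- `M = ⋃ n, M_n`. -/
def Mtot (B : BD Γ) : Set (Linf Γ) := ⋃ n, B.M n

/-- `C_n = (f ∘ i_{n+1} ∘ f ∘ T_{s_{n+1}} ∘ r_{n+1} ∘ i_n)
(f(s_{n+1}B_{ℓ∞(Γ_n)}) \ f(s_n B_{ℓ∞(Γ_n)}))`. -/
def C (B : BD Γ) (n : ℕ) : Set (Linf Γ) :=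
  (fun z => quant (B.i (n + 1) (quant (trunc (B.s (n + 1)) (restr (B.Γs (n + 1)) (B.i n z)))))) ''
    (quant '' suppBall (B.Γs n) (B.s (n + 1)) \ quant '' suppBall (B.Γs n) (B.s n))

/-- `D_n = M_n ∪ C_n`. -/
def D (B : BD Γ) (n : ℕ) : Set (Linf Γ) := B.M n ∪ B.C n

end BD


/-!
A point of `M_n` outside `D_{n-1}` is some `x_j`, with restriction `r_n(d_k) + y_c` to `Γ_n`.
The step `ψ_{n,j}` lowers the truncation level of the `Δ_n`-part by one and lands in `D_{n-1}`
or on an earlier `x_{j'}` with the same `d_k`. Following these steps, `Ψ_{n,i}` sends every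
`z ∈ M_n` to a point with restriction `r_n(d_k) + T_h(y_c)`, where by the lexicographic order of
the enumeration `h` lies within `1` of a level depending on `i` alone. The estimate then combines
`‖z - w‖ ≤ λ ‖r_n z - r_n w‖ + 2λ + 2` on `M_n`, the bound
`‖T_h f - T_{h'} g‖ ≤ |h - h'| + ‖f - g‖`, and the fact that `r_n` is Lipschitz up to an additive
constant on `D_{n-1}`; additive constants are absorbed because distinct points of `M_n` are
integer-valued, hence at distance at least `1`.
-/

lemma ent_zero : ent 0 = 0 := by simp [ent]

lemma ent_intCast (m : ℤ) : ent m = m := by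
  rcases lt_trichotomy m 0 with h | rfl | h
  · have h' : (m : ℝ) < 0 := by exact_mod_cast h
    rw [ent, Real.sign_of_neg h', abs_of_neg h', ← Int.cast_neg, Int.floor_intCast]
    push_cast; ring
  · simp [ent_zero]
  · have h' : (0 : ℝ) < m := by exact_mod_cast h
    rw [ent, Real.sign_of_pos h', abs_of_pos h', Int.floor_intCast, one_mul]

lemma exists_ent_eq_intCast (r : ℝ) : ∃ m : ℤ, ent r = m := by
  rcases Real.sign_apply_eq r with h | h | h <;> rw [ent, h]
  exacts [⟨-⌊|r|⌋, by push_cast; ring⟩, ⟨0, by simp⟩, ⟨⌊|r|⌋, by simp⟩]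

lemma abs_ent_sub_le (r : ℝ) : |ent r - r| ≤ 1 := by
  rcases lt_trichotomy r 0 with h | rfl | h
  · rw [ent, Real.sign_of_neg h, abs_of_neg h, abs_le]
    constructor <;> linarith [Int.floor_le (-r), Int.lt_floor_add_one (-r)]
  · simp [ent_zero]
  · rw [ent, Real.sign_of_pos h, abs_of_pos h, abs_le]
    constructor <;> linarith [Int.floor_le r, Int.lt_floor_add_one r]

lemma truncFun_eq_max_min {s : ℝ} (hs : 0 ≤ s) (t : ℝ) :
    truncFun s t = max (-s) (min s t) := by
  unfold truncFun
  split_ifs with h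
  · rw [abs_le] at h
    rw [min_eq_right h.2, max_eq_right h.1]
  · rcases lt_or_gt_of_ne (show t ≠ 0 by rintro rfl; simp_all) with ht | ht
    · rw [abs_of_neg ht] at h ⊢
      rw [min_eq_right (by linarith), max_eq_left (by linarith), div_neg, mul_div_assoc,
        div_self ht.ne, mul_one]
    · rw [abs_of_pos ht] at h ⊢
      rw [min_eq_left (by linarith), max_eq_right (by linarith), mul_div_assoc,
        div_self ht.ne', mul_one]

lemma truncFun_of_abs_le {s t : ℝ} (h : |t| ≤ s) : truncFun s t = t := if_pos h

lemma truncFun_zero_right (s : ℝ) : truncFun s 0 = 0 := by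
  unfold truncFun; split_ifs <;> simp

lemma abs_truncFun_le_level {s : ℝ} (hs : 0 ≤ s) (t : ℝ) : |truncFun s t| ≤ s := by
  rw [truncFun_eq_max_min hs, abs_le]
  exact ⟨le_max_left _ _, max_le (by linarith) (min_le_left _ _)⟩

lemma abs_truncFun_of_le_abs {s t : ℝ} (hs : 0 ≤ s) (h : s ≤ |t|) : |truncFun s t| = s := by
  rw [truncFun_eq_max_min hs]
  rcases le_total 0 t with ht | ht
  · rw [abs_of_nonneg ht] at h
    rw [min_eq_left h, max_eq_right (by linarith), abs_of_nonneg hs]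
  · rw [abs_of_nonpos ht] at h
    rw [min_eq_right (by linarith), max_eq_left (by linarith), abs_neg, abs_of_nonneg hs]

lemma abs_truncFun_sub_truncFun_le {s s' a b : ℝ} (hs : 0 ≤ s) (hs' : 0 ≤ s') :
    |truncFun s a - truncFun s' b| ≤ |s - s'| + |a - b| := by
  rw [truncFun_eq_max_min hs, truncFun_eq_max_min hs']
  refine (abs_max_sub_max_le_max _ _ _ _).trans (max_le ?_ ?_)
  · rw [neg_sub_neg, abs_sub_comm]; linarith [abs_nonneg (a - b)]
  · exact (abs_min_sub_min_le_max _ _ _ _).trans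
      (max_le_iff.2 ⟨by linarith [abs_nonneg (a - b)], by linarith [abs_nonneg (s - s')]⟩)

lemma truncFun_truncFun {s s' : ℝ} (hs : 0 ≤ s) (hs' : 0 ≤ s') (t : ℝ) :
    truncFun s (truncFun s' t) = truncFun (min s s') t := by
  rw [truncFun_eq_max_min hs, truncFun_eq_max_min hs', truncFun_eq_max_min (le_min hs hs')]
  rcases le_total s s' with h | h
  · rw [min_eq_left h, min_max_distrib_left, min_eq_right (by linarith : -s' ≤ s), ← min_assoc,
      min_eq_left h, ← max_assoc, max_eq_left (by linarith : -s' ≤ -s)]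
  · rw [min_eq_right h, min_eq_right (max_le (by linarith) ((min_le_left _ _).trans h)),
      max_eq_right (le_max_left _ _ |>.trans' (by linarith))]

lemma exists_truncFun_eq_intCast (s t : ℤ) : ∃ m : ℤ, truncFun s t = m := by
  unfold truncFun
  split_ifs
  · exact ⟨t, rfl⟩
  · rcases lt_trichotomy t 0 with h | rfl | h
    · have h' : (t : ℝ) < 0 := by exact_mod_cast h
      exact ⟨-s, by rw [abs_of_neg h', mul_div_assoc, div_neg, div_self h'.ne]; push_cast; ring⟩
    · exact ⟨0, by simp⟩
    · have h' : (0 : ℝ) < t := by exact_mod_cast h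
      exact ⟨s, by rw [abs_of_pos h', mul_div_assoc, div_self h'.ne', mul_one]⟩

lemma abs_add_truncFun_le {s a t r : ℝ} (hs : 0 ≤ s) (ha : |a| ≤ r) (hat : |a + t| ≤ r) :
    |a + truncFun s t| ≤ r := by
  rw [truncFun_eq_max_min hs]
  rw [abs_le] at ha hat ⊢
  simp only [min_def, max_def]
  split_ifs <;> constructor <;> linarith

section Linf

variable {S T : Set Γ} {f g : Linf Γ} {h h' : ℝ}

def IntValued (f : Linf Γ) : Prop := ∀ γ, ∃ m : ℤ, f γ = m

lemma abs_apply_le_norm (f : Linf Γ) (γ : Γ) : |f γ| ≤ ‖f‖ := f.norm_coe_le_norm γ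

lemma norm_le_of_forall_abs_le {C : ℝ} (hC : 0 ≤ C) (hf : ∀ γ, |f γ| ≤ C) :
    ‖f‖ ≤ C :=
  (BoundedContinuousFunction.norm_le hC).2 hf

lemma IntValued.sub (hf : IntValued f) (hg : IntValued g) : IntValued (f - g) := fun γ => by
  obtain ⟨m, hm⟩ := hf γ; obtain ⟨m', hm'⟩ := hg γ
  exact ⟨m - m', by simp [hm, hm']⟩

lemma IntValued.add (hf : IntValued f) (hg : IntValued g) : IntValued (f + g) := fun γ => by
  obtain ⟨m, hm⟩ := hf γ; obtain ⟨m', hm'⟩ := hg γ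
  exact ⟨m + m', by simp [hm, hm']⟩

lemma IntValued.one_le_norm (hf : IntValued f) (h0 : f ≠ 0) : 1 ≤ ‖f‖ := by
  obtain ⟨γ, hγ⟩ : ∃ γ, f γ ≠ 0 := by
    by_contra! H; exact h0 (BoundedContinuousFunction.ext H)
  obtain ⟨m, hm⟩ := hf γ
  have hm0 : m ≠ 0 := by rintro rfl; simp_all
  calc (1 : ℝ) ≤ |(m : ℝ)| := by exact_mod_cast Int.one_le_abs hm0
    _ = |f γ| := by rw [hm]
    _ ≤ ‖f‖ := abs_apply_le_norm f γ

lemma exists_abs_apply_eq_norm (hS : S.Finite) (hf : ∀ γ ∉ S, f γ = 0) (h0 : f ≠ 0) :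
    ∃ γ, |f γ| = ‖f‖ := by
  obtain ⟨γ₁, hγ₁⟩ : ∃ γ, f γ ≠ 0 := by
    by_contra! H; exact h0 (BoundedContinuousFunction.ext H)
  have hne : hS.toFinset.Nonempty :=
    ⟨γ₁, hS.mem_toFinset.2 (not_imp_comm.1 (hf γ₁) hγ₁)⟩
  obtain ⟨γ, -, hγ⟩ := hS.toFinset.exists_max_image (fun γ => |f γ|) hne
  refine ⟨γ, le_antisymm (abs_apply_le_norm f γ) (norm_le_of_forall_abs_le (abs_nonneg _) ?_)⟩
  intro γ'
  by_cases hγ' : γ' ∈ S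
  · exact hγ γ' (hS.mem_toFinset.2 hγ')
  · simp [hf γ' hγ']

lemma quant_apply (f : Linf Γ) (γ : Γ) : quant f γ = ent (f γ) := rfl

lemma intValued_quant (f : Linf Γ) : IntValued (quant f) := fun γ => exists_ent_eq_intCast (f γ)

lemma IntValued.quant_eq (hf : IntValued f) : quant f = f := by
  ext γ; obtain ⟨m, hm⟩ := hf γ; rw [quant_apply, hm, ent_intCast]

lemma norm_quant_sub_le (f : Linf Γ) : ‖quant f - f‖ ≤ 1 :=
  norm_le_of_forall_abs_le zero_le_one fun γ => abs_ent_sub_le (f γ)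

lemma norm_quant_le (f : Linf Γ) : ‖quant f‖ ≤ ‖f‖ :=
  norm_le_of_forall_abs_le (norm_nonneg f) fun γ => (abs_ent_le _).trans (abs_apply_le_norm f γ)

lemma norm_quant_sub_quant_le (f g : Linf Γ) : ‖quant f - quant g‖ ≤ ‖f - g‖ + 2 := by
  have hf := norm_quant_sub_le f
  have hg := norm_quant_sub_le g
  calc ‖quant f - quant g‖ = ‖(quant f - f) + (f - g) - (quant g - g)‖ := by congr 1; abel
    _ ≤ ‖quant f - f‖ + ‖f - g‖ + ‖quant g - g‖ :=
        norm_sub_le_of_le (norm_add_le _ _) le_rfl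
    _ ≤ ‖f - g‖ + 2 := by linarith

lemma quant_apply_eq_zero {γ : Γ} (hf : f γ = 0) : quant f γ = 0 := by
  rw [quant_apply, hf, ent_zero]

lemma mem_quant_image_iff {P : Linf Γ → Prop} (hP : ∀ f, P f → P (quant f)) :
    g ∈ quant '' {f | P f} ↔ IntValued g ∧ P g :=
  ⟨fun ⟨f, hf, hfg⟩ => hfg ▸ ⟨intValued_quant f, hP f hf⟩,
    fun ⟨hg, hPg⟩ => ⟨g, hPg, hg.quant_eq⟩⟩

lemma mem_quant_suppBall_iff :
    g ∈ quant '' suppBall S h ↔ IntValued g ∧ (∀ γ ∉ S, g γ = 0) ∧ ‖g‖ ≤ h :=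
  mem_quant_image_iff fun f hf =>
    ⟨fun γ hγ => quant_apply_eq_zero (hf.1 γ hγ), (norm_quant_le f).trans hf.2⟩

lemma mem_quant_supp_iff :
    g ∈ quant '' {f | ∀ γ ∉ S, f γ = 0} ↔ IntValued g ∧ ∀ γ ∉ S, g γ = 0 :=
  mem_quant_image_iff fun _ hf γ hγ => quant_apply_eq_zero (hf γ hγ)

lemma restr_apply (S : Set Γ) (f : Linf Γ) (γ : Γ) : restr S f γ = S.indicator f γ := rfl

lemma restr_apply_of_mem {γ : Γ} (hγ : γ ∈ S) (f : Linf Γ) : restr S f γ = f γ :=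
  Set.indicator_of_mem hγ f

lemma restr_apply_of_notMem {γ : Γ} (hγ : γ ∉ S) (f : Linf Γ) : restr S f γ = 0 :=
  Set.indicator_of_notMem hγ f

lemma restr_add (S : Set Γ) (f g : Linf Γ) : restr S (f + g) = restr S f + restr S g := by
  ext γ; by_cases hγ : γ ∈ S <;> simp [restr_apply, hγ]

lemma restr_sub (S : Set Γ) (f g : Linf Γ) : restr S (f - g) = restr S f - restr S g := by
  ext γ; by_cases hγ : γ ∈ S <;> simp [restr_apply, hγ]

lemma restr_restr (hST : S ⊆ T) (f : Linf Γ) : restr S (restr T f) = restr S f := by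
  ext γ; by_cases hγ : γ ∈ S
  · simp [restr_apply, hγ, hST hγ]
  · simp [restr_apply, hγ]

lemma restr_eq_restr_add_restr_diff (hST : S ⊆ T) (f : Linf Γ) :
    restr T f = restr S f + restr (T \ S) f := by
  ext γ; by_cases hγ : γ ∈ S
  · simp [restr_apply, hγ, hST hγ]
  · by_cases hγ' : γ ∈ T <;> simp [restr_apply, hγ, hγ']

lemma restr_eq_self (hf : ∀ γ ∉ S, f γ = 0) : restr S f = f := by
  ext γ; by_cases hγ : γ ∈ S
  · exact restr_apply_of_mem hγ f
  · rw [restr_apply_of_notMem hγ, hf γ hγ]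

lemma restr_eq_zero (hf : ∀ γ ∈ S, f γ = 0) : restr S f = 0 := by
  ext γ; by_cases hγ : γ ∈ S
  · rw [restr_apply_of_mem hγ, hf γ hγ]; rfl
  · exact restr_apply_of_notMem hγ f

lemma norm_restr_le (S : Set Γ) (f : Linf Γ) : ‖restr S f‖ ≤ ‖f‖ :=
  norm_le_of_forall_abs_le (norm_nonneg f) fun γ => by
    by_cases hγ : γ ∈ S
    · rw [restr_apply_of_mem hγ]; exact abs_apply_le_norm f γ
    · rw [restr_apply_of_notMem hγ, abs_zero]; exact norm_nonneg f

lemma IntValued.restr (hf : IntValued f) (S : Set Γ) : IntValued (restr S f) := fun γ => by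
  by_cases hγ : γ ∈ S
  · rw [restr_apply_of_mem hγ]; exact hf γ
  · exact ⟨0, by rw [restr_apply_of_notMem hγ]; simp⟩

lemma quant_restr (S : Set Γ) (f : Linf Γ) : quant (restr S f) = restr S (quant f) := by
  ext γ; by_cases hγ : γ ∈ S
  · rw [restr_apply_of_mem hγ, quant_apply, quant_apply, restr_apply_of_mem hγ]
  · rw [restr_apply_of_notMem hγ, quant_apply_eq_zero (restr_apply_of_notMem hγ f)]

lemma trunc_apply (h : ℝ) (f : Linf Γ) (γ : Γ) : trunc h f γ = truncFun h (f γ) := rfl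

lemma trunc_apply_eq_zero {γ : Γ} (hf : f γ = 0) : trunc h f γ = 0 := by
  rw [trunc_apply, hf, truncFun_zero_right]

lemma trunc_zero_right (h : ℝ) : trunc h (0 : Linf Γ) = 0 := by
  ext γ; exact trunc_apply_eq_zero rfl

lemma restr_trunc (S : Set Γ) (h : ℝ) (f : Linf Γ) :
    restr S (trunc h f) = trunc h (restr S f) := by
  ext γ; by_cases hγ : γ ∈ S
  · rw [restr_apply_of_mem hγ, trunc_apply, trunc_apply, restr_apply_of_mem hγ]
  · rw [restr_apply_of_notMem hγ, trunc_apply_eq_zero (restr_apply_of_notMem hγ f)]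

lemma trunc_eq_self (hf : ‖f‖ ≤ h) : trunc h f = f := by
  ext γ; exact truncFun_of_abs_le ((abs_apply_le_norm f γ).trans hf)

lemma trunc_trunc (hh : 0 ≤ h) (hh' : 0 ≤ h') (f : Linf Γ) :
    trunc h (trunc h' f) = trunc (min h h') f := by
  ext γ; exact truncFun_truncFun hh hh' (f γ)

lemma norm_trunc_le (hh : 0 ≤ h) (f : Linf Γ) : ‖trunc h f‖ ≤ h :=
  norm_le_of_forall_abs_le hh fun γ => abs_truncFun_le_level hh (f γ)

lemma norm_trunc_eq {γ : Γ} (hh : 0 ≤ h) (hγ : h ≤ |f γ|) : ‖trunc h f‖ = h :=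
  le_antisymm (norm_trunc_le hh f)
    ((abs_truncFun_of_le_abs hh hγ).symm.le.trans (abs_apply_le_norm (trunc h f) γ))

lemma norm_trunc_sub_trunc_le (hh : 0 ≤ h) (hh' : 0 ≤ h') (f g : Linf Γ) :
    ‖trunc h f - trunc h' g‖ ≤ |h - h'| + ‖f - g‖ :=
  norm_le_of_forall_abs_le (by positivity) fun γ =>
    (abs_truncFun_sub_truncFun_le hh hh').trans (by
      gcongr; exact abs_apply_le_norm (f - g) γ)

lemma norm_add_trunc_le {r : ℝ} (hh : 0 ≤ h) (hf : ‖f‖ ≤ r) (hfg : ‖f + g‖ ≤ r) :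
    ‖f + trunc h g‖ ≤ r :=
  norm_le_of_forall_abs_le ((norm_nonneg f).trans hf) fun γ =>
    abs_add_truncFun_le hh ((abs_apply_le_norm f γ).trans hf)
      ((abs_apply_le_norm (f + g) γ).trans hfg)

lemma norm_add_trunc_sub_sub_le (hh : 0 ≤ h) (hh' : 0 ≤ h') (a b a' b' : Linf Γ) :
    ‖(a + trunc h (b - a)) - (a' + trunc h' (b' - a'))‖ ≤
      |h - h'| + ‖b - b'‖ + 2 * ‖a - a'‖ :=
  calc ‖(a + trunc h (b - a)) - (a' + trunc h' (b' - a'))‖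
      = ‖(a - a') + (trunc h (b - a) - trunc h' (b' - a'))‖ := by congr 1; abel
    _ ≤ ‖a - a'‖ + (|h - h'| + ‖(b - b') - (a - a')‖) :=
        (norm_add_le _ _).trans (add_le_add_right (by
          rw [show (b - b') - (a - a') = (b - a) - (b' - a') by abel]
          exact norm_trunc_sub_trunc_le hh hh' _ _) _)
    _ ≤ |h - h'| + ‖b - b'‖ + 2 * ‖a - a'‖ := by linarith [norm_sub_le (b - b') (a - a')]

lemma IntValued.trunc (hf : IntValued f) {m : ℤ} : IntValued (trunc m f) := fun γ => by
  obtain ⟨k, hk⟩ := hf γ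
  rw [trunc_apply, hk]
  exact exists_truncFun_eq_intCast m k

end Linf

namespace BD

variable (B : BD Γ)

lemma one_le_cast_lam : (1 : ℝ) ≤ B.lam := by exact_mod_cast B.one_le_lam

lemma s_nonneg (m : ℕ) : 0 ≤ B.s m := pow_nonneg (Nat.cast_nonneg _) m

lemma lam_mul_s_le {p q : ℕ} (hpq : p < q) : B.lam * B.s p ≤ B.s q := by
  rw [s, s, ← pow_succ']; exact pow_le_pow_right₀ B.one_le_cast_lam hpq

lemma Γs_subset_succ {m : ℕ} (hm : 1 ≤ m) : B.Γs m ⊆ B.Γs (m + 1) :=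
  (B.ssubset m hm).subset

lemma norm_i_apply_le {m : ℕ} (hm : 1 ≤ m) (f : Linf Γ) : ‖B.i m f‖ ≤ B.lam * ‖f‖ :=
  ((B.i m).le_opNorm f).trans (by gcongr; exact B.norm_i_le m hm)

lemma restr_i {m : ℕ} (hm : 1 ≤ m) (f : Linf Γ) :
    restr (B.Γs m) (B.i m f) = restr (B.Γs m) f := by
  ext γ; by_cases hγ : γ ∈ B.Γs m
  · rw [restr_apply_of_mem hγ, restr_apply_of_mem hγ, B.extension m hm f γ hγ]
  · rw [restr_apply_of_notMem hγ, restr_apply_of_notMem hγ]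

lemma i_restr_i {p m : ℕ} (hp : 1 ≤ p) (hpm : p ≤ m) (u : Linf Γ) :
    B.i m (restr (B.Γs m) (B.i p u)) = B.i p u := by
  rcases hpm.lt_or_eq with hpm | rfl
  · exact B.compatible p m hp hpm u
  · rw [B.restr_i hp, B.factor p hp]

lemma restr_quant_i {m : ℕ} (hm : 1 ≤ m) {v : Linf Γ} (hv : IntValued v)
    (hvS : ∀ γ ∉ B.Γs m, v γ = 0) : restr (B.Γs m) (quant (B.i m v)) = v := by
  rw [← quant_restr, B.restr_i hm, restr_eq_self hvS, hv.quant_eq]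

lemma M_zero : B.M 0 = ∅ := rfl

lemma mem_M_succ {N : ℕ} {z : Linf Γ} :
    z ∈ B.M (N + 1) ↔ z ∈ B.M N ∨ ∃ v ∈ quant '' suppBall (B.Γs (N + 1)) (B.s (N + 1)),
      v ∉ restr (B.Γs (N + 1)) '' B.M N ∧ quant (B.i (N + 1) v) = z := by
  simp only [BD.M, Set.mem_union, Set.mem_image, Set.mem_sdiff, and_assoc]

lemma M_mono : Monotone B.M := monotone_nat_of_le_succ fun _ _ hz => (B.mem_M_succ).2 (Or.inl hz)

lemma exists_of_mem_M {N : ℕ} {z : Linf Γ} (hz : z ∈ B.M N) :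
    ∃ p u, 1 ≤ p ∧ p ≤ N ∧ u ∈ quant '' suppBall (B.Γs p) (B.s p) ∧
      z = quant (B.i p u) := by
  induction N with
  | zero => simp [M_zero] at hz
  | succ N ih =>
    rcases B.mem_M_succ.1 hz with hz | ⟨v, hv, -, rfl⟩
    · obtain ⟨p, u, hp, hpN, hu, rfl⟩ := ih hz
      exact ⟨p, u, hp, hpN.trans N.le_succ, hu, rfl⟩
    · exact ⟨N + 1, v, N.succ_pos, le_rfl, hv, rfl⟩

lemma intValued_of_mem_M {N : ℕ} {z : Linf Γ} (hz : z ∈ B.M N) : IntValued z := by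
  obtain ⟨p, u, -, -, -, rfl⟩ := B.exists_of_mem_M hz; exact intValued_quant _

lemma restr_quant_i_of_mem {m : ℕ} (hm : 1 ≤ m) {v : Linf Γ}
    (hv : v ∈ quant '' suppBall (B.Γs m) (B.s m)) : restr (B.Γs m) (quant (B.i m v)) = v := by
  obtain ⟨hvZ, hvS, -⟩ := mem_quant_suppBall_iff.1 hv
  exact B.restr_quant_i hm hvZ hvS

lemma injOn_restr_M (N : ℕ) : Set.InjOn (restr (B.Γs N)) (B.M N) := by
  induction N with
  | zero => simp [M_zero]
  | succ N ih =>
    intro z hz z' hz' hzz'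
    have hN := N.succ_pos
    rcases B.mem_M_succ.1 hz with hz | ⟨v, hv, hvM, rfl⟩ <;>
      rcases B.mem_M_succ.1 hz' with hz' | ⟨v', hv', hvM', rfl⟩
    · have hN1 : 1 ≤ N := Nat.pos_of_ne_zero (by rintro rfl; simp [M_zero] at hz)
      apply ih hz hz'
      rw [← restr_restr (B.Γs_subset_succ hN1) z, hzz', restr_restr (B.Γs_subset_succ hN1)]
    · exact (hvM' ⟨z, hz, by rw [hzz', B.restr_quant_i_of_mem hN hv']⟩).elim
    · exact (hvM ⟨z', hz', by rw [← hzz', B.restr_quant_i_of_mem hN hv]⟩).elim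
    · rw [← B.restr_quant_i_of_mem hN hv, ← B.restr_quant_i_of_mem hN hv', hzz']

-- `z = f(i_p u)` is within `1` of `i_p u`, which `i_m ∘ r_m` fixes.
lemma norm_sub_i_restr_le {m : ℕ} (hm : 1 ≤ m) {z : Linf Γ} (hz : z ∈ B.M m) :
    ‖z - B.i m (restr (B.Γs m) z)‖ ≤ B.lam + 1 := by
  obtain ⟨p, u, hp, hpm, -, rfl⟩ := B.exists_of_mem_M hz
  set w := B.i p u
  have hw : B.i m (restr (B.Γs m) w) = w := B.i_restr_i hp hpm u
  have hq := norm_quant_sub_le w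
  calc ‖quant w - B.i m (restr (B.Γs m) (quant w))‖
      = ‖(quant w - w) - B.i m (restr (B.Γs m) (quant w - w))‖ := by
        rw [restr_sub, map_sub, hw]; abel_nf
    _ ≤ ‖quant w - w‖ + B.lam * ‖restr (B.Γs m) (quant w - w)‖ :=
        (norm_sub_le _ _).trans (by gcongr; exact B.norm_i_apply_le hm _)
    _ ≤ 1 + B.lam * 1 := by
        gcongr
        exact (norm_restr_le _ _).trans hq
    _ = B.lam + 1 := by ring

lemma norm_sub_le_of_mem_M {m : ℕ} (hm : 1 ≤ m) {z w : Linf Γ} (hz : z ∈ B.M m)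
    (hw : w ∈ B.M m) :
    ‖z - w‖ ≤ B.lam * ‖restr (B.Γs m) z - restr (B.Γs m) w‖ + (2 * B.lam + 2) := by
  have hz' := B.norm_sub_i_restr_le hm hz
  have hw' := B.norm_sub_i_restr_le hm hw
  have hi : ‖B.i m (restr (B.Γs m) z) - B.i m (restr (B.Γs m) w)‖ ≤
      B.lam * ‖restr (B.Γs m) z - restr (B.Γs m) w‖ := by
    rw [← map_sub]; exact B.norm_i_apply_le hm _
  calc ‖z - w‖ = ‖(z - B.i m (restr (B.Γs m) z)) +
        (B.i m (restr (B.Γs m) z) - B.i m (restr (B.Γs m) w)) -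
        (w - B.i m (restr (B.Γs m) w))‖ := by congr 1; abel
    _ ≤ ‖z - B.i m (restr (B.Γs m) z)‖ +
        ‖B.i m (restr (B.Γs m) z) - B.i m (restr (B.Γs m) w)‖ +
        ‖w - B.i m (restr (B.Γs m) w)‖ := norm_sub_le_of_le (norm_add_le _ _) le_rfl
    _ ≤ _ := by linarith

end BD

namespace BD

variable (B : BD Γ) {m : ℕ}

-- `C_m` is the image of `f ∘ i_{m+1} ∘ G_m`.
def G (m : ℕ) (ξ : Linf Γ) : Linf Γ :=
  quant (trunc (B.s (m + 1)) (restr (B.Γs (m + 1)) (B.i m ξ)))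

lemma intValued_G (ξ : Linf Γ) : IntValued (B.G m ξ) := intValued_quant _

lemma G_apply_eq_zero (ξ : Linf Γ) {γ : Γ} (hγ : γ ∉ B.Γs (m + 1)) : B.G m ξ γ = 0 :=
  quant_apply_eq_zero (trunc_apply_eq_zero (restr_apply_of_notMem hγ _))

lemma norm_G_le (ξ : Linf Γ) : ‖B.G m ξ‖ ≤ B.s (m + 1) :=
  (norm_quant_le _).trans (norm_trunc_le (B.s_nonneg _) _)

lemma norm_G_sub_G_le (hm : 1 ≤ m) (ξ ξ' : Linf Γ) :
    ‖B.G m ξ - B.G m ξ'‖ ≤ B.lam * ‖ξ - ξ'‖ + 2 :=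
  calc ‖B.G m ξ - B.G m ξ'‖
      ≤ ‖trunc (B.s (m + 1)) (restr (B.Γs (m + 1)) (B.i m ξ)) -
          trunc (B.s (m + 1)) (restr (B.Γs (m + 1)) (B.i m ξ'))‖ + 2 :=
        norm_quant_sub_quant_le _ _
    _ ≤ ‖restr (B.Γs (m + 1)) (B.i m ξ) - restr (B.Γs (m + 1)) (B.i m ξ')‖ + 2 := by
        grw [norm_trunc_sub_trunc_le (B.s_nonneg _) (B.s_nonneg _), sub_self, abs_zero, zero_add]
    _ ≤ B.lam * ‖ξ - ξ'‖ + 2 := by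
        rw [← restr_sub, ← map_sub]
        grw [norm_restr_le, B.norm_i_apply_le hm]

lemma mem_C {d : Linf Γ} : d ∈ B.C m ↔ ∃ ξ ∈ quant '' suppBall (B.Γs m) (B.s (m + 1)) \
    quant '' suppBall (B.Γs m) (B.s m), quant (B.i (m + 1) (B.G m ξ)) = d := Iff.rfl

lemma restr_quant_i_G (ξ : Linf Γ) :
    restr (B.Γs (m + 1)) (quant (B.i (m + 1) (B.G m ξ))) = B.G m ξ :=
  B.restr_quant_i m.succ_pos (B.intValued_G ξ) fun _ => B.G_apply_eq_zero ξ

lemma intValued_of_mem_D {d : Linf Γ} (hd : d ∈ B.D m) : IntValued d := by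
  rcases hd with hd | hd
  · exact B.intValued_of_mem_M hd
  · obtain ⟨ξ, -, rfl⟩ := B.mem_C.1 hd
    exact intValued_quant _

-- For `d = f(i_p u) ∈ M_m` take `ξ = r_m(i_p u)`: then `i_m ξ = i_p u`, whose norm is already
-- at most `λ s_p ≤ s_{m+1}`, so the truncation in `G_m` does nothing.
lemma exists_restr_eq_G (hm : 1 ≤ m) {d : Linf Γ} (hd : d ∈ B.D m) :
    ∃ ξ, restr (B.Γs (m + 1)) d = B.G m ξ ∧ ‖ξ - restr (B.Γs m) d‖ ≤ 1 := by
  rcases hd with hd | hd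
  · obtain ⟨p, u, hp, hpm, hu, rfl⟩ := B.exists_of_mem_M hd
    refine ⟨restr (B.Γs m) (B.i p u), ?_, ?_⟩
    · have hnorm : ‖restr (B.Γs (m + 1)) (B.i p u)‖ ≤ B.s (m + 1) :=
        calc ‖restr (B.Γs (m + 1)) (B.i p u)‖ ≤ B.lam * ‖u‖ :=
              (norm_restr_le _ _).trans (B.norm_i_apply_le hp u)
          _ ≤ B.lam * B.s p := by gcongr; exact (mem_quant_suppBall_iff.1 hu).2.2
          _ ≤ B.s (m + 1) := B.lam_mul_s_le (Nat.lt_succ_of_le hpm)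
      rw [G, B.i_restr_i hp hpm, trunc_eq_self hnorm, quant_restr]
    · rw [← restr_sub]
      refine (norm_restr_le _ _).trans ?_
      rw [norm_sub_rev]
      exact norm_quant_sub_le _
  · obtain ⟨ξ, ⟨hξ, -⟩, rfl⟩ := B.mem_C.1 hd
    obtain ⟨hξZ, hξS, hξn⟩ := mem_quant_suppBall_iff.1 hξ
    refine ⟨ξ, B.restr_quant_i_G ξ, ?_⟩
    rw [← restr_restr (B.Γs_subset_succ hm), B.restr_quant_i_G, G, ← quant_restr, restr_trunc,
      restr_restr (B.Γs_subset_succ hm), B.restr_i hm, restr_eq_self hξS,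
      trunc_eq_self hξn, hξZ.quant_eq, sub_self, norm_zero]
    exact zero_le_one

lemma norm_restr_le_of_mem_D (hm : 1 ≤ m) {d : Linf Γ} (hd : d ∈ B.D m) :
    ‖restr (B.Γs (m + 1)) d‖ ≤ B.s (m + 1) := by
  obtain ⟨ξ, hξ, -⟩ := B.exists_restr_eq_G hm hd
  exact hξ ▸ B.norm_G_le ξ

lemma norm_restr_sub_restr_le_of_mem_D (hm : 1 ≤ m) {d d' : Linf Γ} (hd : d ∈ B.D m)
    (hd' : d' ∈ B.D m) :
    ‖restr (B.Γs (m + 1)) d - restr (B.Γs (m + 1)) d'‖ ≤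
      B.lam * ‖restr (B.Γs m) d - restr (B.Γs m) d'‖ + (2 * B.lam + 2) := by
  obtain ⟨ξ, hξ, hξd⟩ := B.exists_restr_eq_G hm hd
  obtain ⟨ξ', hξ', hξd'⟩ := B.exists_restr_eq_G hm hd'
  have hξξ' : ‖ξ - ξ'‖ ≤ ‖restr (B.Γs m) d - restr (B.Γs m) d'‖ + 2 :=
    calc ‖ξ - ξ'‖ = ‖(ξ - restr (B.Γs m) d) + (restr (B.Γs m) d - restr (B.Γs m) d') -
          (ξ' - restr (B.Γs m) d')‖ := by congr 1; abel
      _ ≤ ‖ξ - restr (B.Γs m) d‖ + ‖restr (B.Γs m) d - restr (B.Γs m) d'‖ +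
          ‖ξ' - restr (B.Γs m) d'‖ := norm_sub_le_of_le (norm_add_le _ _) le_rfl
      _ ≤ _ := by linarith
  rw [hξ, hξ']
  grw [B.norm_G_sub_G_le hm, hξξ']
  linarith

lemma mem_D_of_restr_eq {z d : Linf Γ} (hz : z ∈ B.M (m + 1)) (hd : d ∈ B.D m)
    (hzd : restr (B.Γs (m + 1)) z = restr (B.Γs (m + 1)) d) : z ∈ B.D m := by
  rcases hd with hd | hdC
  · exact B.injOn_restr_M (m + 1) hz (B.M_mono m.le_succ hd) hzd ▸ Or.inl hd
  obtain ⟨ξ, -, rfl⟩ := B.mem_C.1 hdC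
  rw [B.restr_quant_i_G] at hzd
  by_cases hξ : B.G m ξ ∈ restr (B.Γs (m + 1)) '' B.M m
  · obtain ⟨z', hz', hz'ξ⟩ := hξ
    exact B.injOn_restr_M (m + 1) hz (B.M_mono m.le_succ hz') (hzd.trans hz'ξ.symm) ▸ Or.inl hz'
  · have hball : B.G m ξ ∈ quant '' suppBall (B.Γs (m + 1)) (B.s (m + 1)) :=
      mem_quant_suppBall_iff.2 ⟨B.intValued_G ξ, fun _ => B.G_apply_eq_zero ξ, B.norm_G_le ξ⟩
    have hdM : quant (B.i (m + 1) (B.G m ξ)) ∈ B.M (m + 1) :=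
      B.mem_M_succ.2 (Or.inr ⟨_, hball, hξ, rfl⟩)
    exact B.injOn_restr_M (m + 1) hz hdM (hzd.trans (B.restr_quant_i_G ξ).symm) ▸ Or.inr hdC

end BD

section chain

variable {α : Type*} (T : ℕ → α → α) {a b : ℕ}

lemma chain_of_le (hba : b ≤ a) : chain T a b = id := by
  simp [chain, Nat.sub_eq_zero_of_le hba]

lemma chain_succ (hab : a ≤ b) : chain T a (b + 1) = chain T a b ∘ T (b + 1) := by
  unfold chain
  rw [Nat.succ_sub hab]
  simp [Nat.add_sub_cancel' hab]

lemma chain_trans {m : ℕ} (ham : a ≤ m) (hmb : m ≤ b) :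
    chain T a b = chain T a m ∘ chain T m b := by
  induction b, hmb using Nat.le_induction with
  | base => rw [chain_of_le T le_rfl, Function.comp_id]
  | succ b hmb ih => rw [chain_succ T (ham.trans hmb), ih, chain_succ T hmb, Function.comp_assoc]

variable {T}

lemma chain_apply_eq_self {z : α} (hz : ∀ t, a < t → t ≤ b → T t z = z) :
    chain T a b z = z := by
  rcases le_total b a with hba | hab
  · rw [chain_of_le T hba, id]
  induction b, hab using Nat.le_induction with
  | base => rw [chain_of_le T le_rfl, id]
  | succ b hab ih =>
    rw [chain_succ T hab, Function.comp_apply, hz (b + 1) (by omega) le_rfl]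
    exact ih fun t ht htb => hz t ht (by omega)

lemma chain_apply_eq_chain_apply {j : ℕ} {z : α} (haj : a < j) (hjb : j ≤ b)
    (hz : ∀ t, j < t → t ≤ b → T t z = z)
    (hTz : ∀ t, j ≤ t → t ≤ b → T t (T j z) = T j z) :
    chain T a b z = chain T a b (T j z) := by
  obtain ⟨j, rfl⟩ : ∃ j', j = j' + 1 := ⟨j - 1, by omega⟩
  have haj' : a ≤ j := Nat.le_of_lt_succ haj
  calc chain T a b z = chain T a (j + 1) (chain T (j + 1) b z) := by
        rw [chain_trans T haj.le hjb]; rfl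
    _ = chain T a j (chain T j b (T (j + 1) z)) := by
        rw [chain_apply_eq_self hz, chain_succ T haj', chain_apply_eq_self hTz]; rfl
    _ = chain T a b (T (j + 1) z) := by rw [chain_trans T haj' (by omega : j ≤ b)]; rfl

end chain

-- The hypotheses of Step 3 for a fixed `n`; the enumerations `d`, `e`, `x`, `ψ` start at `1`.
structure BD.RetractionData (B : BD Γ) (n : ℕ) where
  two_le : 2 ≤ n
  y : ℕ → Linf Γ
  y_zero : y 0 = 0
  y_injective : Function.Injective y
  range_y : Set.range y = quant '' {z : Linf Γ | ∀ γ ∉ B.Γs n \ B.Γs (n - 1), z γ = 0}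
  norm_y_mono : ∀ j₁ j₂, j₁ ≤ j₂ → ‖y j₁‖ ≤ ‖y j₂‖
  kn : ℕ
  d : ℕ → Linf Γ
  image_d : d '' Set.Icc 1 kn = B.D (n - 1)
  I : ℕ
  e : ℕ → ℕ × ℕ
  e_mem : ∀ i, 1 ≤ i → i ≤ I → 1 ≤ (e i).1 ∧ 1 ≤ (e i).2 ∧ (e i).2 ≤ kn ∧
    restr (B.Γs n \ B.Γs (n - 1)) (d (e i).2) + y (e i).1 ∈
      quant '' suppBall (B.Γs n \ B.Γs (n - 1)) (B.s n)
  e_surj : ∀ p : ℕ × ℕ, 1 ≤ p.1 → 1 ≤ p.2 → p.2 ≤ kn →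
    restr (B.Γs n \ B.Γs (n - 1)) (d p.2) + y p.1 ∈
      quant '' suppBall (B.Γs n \ B.Γs (n - 1)) (B.s n) →
    ∃ i, 1 ≤ i ∧ i ≤ I ∧ e i = p
  e_lex : ∀ i₁ i₂, 1 ≤ i₁ → i₁ < i₂ → i₂ ≤ I →
    (e i₁).1 < (e i₂).1 ∨ ((e i₁).1 = (e i₂).1 ∧ (e i₁).2 < (e i₂).2)
  x : ℕ → Linf Γ
  x_spec : ∀ i, 1 ≤ i → i ≤ I → x i ∈ B.M n ∧
    restr (B.Γs n) (x i) =
      restr (B.Γs (n - 1)) (d (e i).2) + restr (B.Γs n \ B.Γs (n - 1)) (d (e i).2) + y (e i).1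
  image_x : x '' Set.Icc 1 I = B.M n \ B.D (n - 1)
  ψ : ℕ → Linf Γ → Linf Γ
  ψ_x : ∀ i, 1 ≤ i → i ≤ I → ψ i (x i) ∈ B.M n ∧
    restr (B.Γs n) (ψ i (x i)) =
      restr (B.Γs (n - 1)) (d (e i).2) + restr (B.Γs n \ B.Γs (n - 1)) (d (e i).2) +
        trunc (‖y (e i).1‖ - 1) (y (e i).1)
  ψ_eq_self : ∀ i, 1 ≤ i → i ≤ I →
    ∀ z ∈ B.D (n - 1) ∪ x '' Set.Icc 1 (i - 1), ψ i z = z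

namespace BD.RetractionData

variable {B : BD Γ} {n : ℕ} (S : B.RetractionData n) {i j : ℕ}

lemma one_le_pred (S : B.RetractionData n) : 1 ≤ n - 1 := by have := S.two_le; omega

lemma pred_add_one (S : B.RetractionData n) : n - 1 + 1 = n := by have := S.two_le; omega

lemma Γs_pred_subset (S : B.RetractionData n) : B.Γs (n - 1) ⊆ B.Γs n := by
  simpa only [S.pred_add_one] using B.Γs_subset_succ S.one_le_pred

lemma norm_restr_le_of_mem_D (S : B.RetractionData n) {δ : Linf Γ} (hδ : δ ∈ B.D (n - 1)) :
    ‖restr (B.Γs n) δ‖ ≤ B.s n := by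
  simpa only [S.pred_add_one] using B.norm_restr_le_of_mem_D S.one_le_pred hδ

lemma norm_restr_sub_restr_le_of_mem_D (S : B.RetractionData n) {δ δ' : Linf Γ}
    (hδ : δ ∈ B.D (n - 1)) (hδ' : δ' ∈ B.D (n - 1)) :
    ‖restr (B.Γs n) δ - restr (B.Γs n) δ'‖ ≤
      B.lam * ‖restr (B.Γs (n - 1)) δ - restr (B.Γs (n - 1)) δ'‖ + (2 * B.lam + 2) := by
  simpa only [S.pred_add_one] using B.norm_restr_sub_restr_le_of_mem_D S.one_le_pred hδ hδ'

lemma mem_D_of_restr_eq (S : B.RetractionData n) {z δ : Linf Γ} (hz : z ∈ B.M n)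
    (hδ : δ ∈ B.D (n - 1)) (hzδ : restr (B.Γs n) z = restr (B.Γs n) δ) : z ∈ B.D (n - 1) := by
  rw [← S.pred_add_one] at hz hzδ
  exact B.mem_D_of_restr_eq hz hδ hzδ

lemma intValued_y (c : ℕ) :
    IntValued (S.y c) ∧ ∀ γ ∉ B.Γs n \ B.Γs (n - 1), S.y c γ = 0 :=
  mem_quant_supp_iff.1 (S.range_y ▸ ⟨c, rfl⟩)

lemma exists_y_eq {f : Linf Γ} (hf : IntValued f)
    (hfΔ : ∀ γ ∉ B.Γs n \ B.Γs (n - 1), f γ = 0) :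
    ∃ c, S.y c = f := by
  rw [← Set.mem_range, S.range_y]
  exact mem_quant_supp_iff.2 ⟨hf, hfΔ⟩

lemma y_ne_zero {c : ℕ} (hc : 1 ≤ c) : S.y c ≠ 0 := by
  intro h
  have := S.y_injective (h.trans S.y_zero.symm)
  omega

lemma one_le_norm_y {c : ℕ} (hc : 1 ≤ c) : 1 ≤ ‖S.y c‖ :=
  (S.intValued_y c).1.one_le_norm (S.y_ne_zero hc)

lemma d_mem {k : ℕ} (hk : 1 ≤ k) (hkn : k ≤ S.kn) : S.d k ∈ B.D (n - 1) :=
  S.image_d ▸ ⟨k, ⟨hk, hkn⟩, rfl⟩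

lemma e_fst_mono {j₁ j₂ : ℕ} (hj₁ : 1 ≤ j₁) (h : j₁ ≤ j₂) (hj₂ : j₂ ≤ S.I) :
    (S.e j₁).1 ≤ (S.e j₂).1 := by
  rcases h.lt_or_eq with h | rfl
  · rcases S.e_lex j₁ j₂ hj₁ h hj₂ with h | h
    exacts [h.le, h.1.le]
  · exact le_rfl

lemma restr_x (hj : 1 ≤ j) (hjI : j ≤ S.I) :
    restr (B.Γs n) (S.x j) = restr (B.Γs n) (S.d (S.e j).2) + S.y (S.e j).1 := by
  rw [(S.x_spec j hj hjI).2, restr_eq_restr_add_restr_diff S.Γs_pred_subset]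

lemma restr_ψ_x (hj : 1 ≤ j) (hjI : j ≤ S.I) :
    restr (B.Γs n) (S.ψ j (S.x j)) =
      restr (B.Γs n) (S.d (S.e j).2) + trunc (‖S.y (S.e j).1‖ - 1) (S.y (S.e j).1) := by
  rw [(S.ψ_x j hj hjI).2, restr_eq_restr_add_restr_diff S.Γs_pred_subset]

lemma ψ_eq_self_of_mem_D {t : ℕ} (ht : 1 ≤ t) (htI : t ≤ S.I) {z : Linf Γ}
    (hz : z ∈ B.D (n - 1)) : S.ψ t z = z :=
  S.ψ_eq_self t ht htI z (Or.inl hz)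

lemma ψ_x_of_lt {t : ℕ} (hj : 1 ≤ j) (hjt : j < t) (htI : t ≤ S.I) :
    S.ψ t (S.x j) = S.x j :=
  S.ψ_eq_self t (by omega) htI _ (Or.inr ⟨j, ⟨hj, by omega⟩, rfl⟩)

-- The truncation `T_{‖y_c‖-1}(y_c)` is again some `y_{c'}`, of norm `‖y_c‖ - 1`; it is `0` only
-- when `‖y_c‖ = 1`, and otherwise `‖y_{c'}‖ < ‖y_c‖` puts `(c', k)` before `(c, k)` in the
-- enumeration.
lemma ψ_x_mem_D_or_eq_x (hj : 1 ≤ j) (hjI : j ≤ S.I) :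
    (S.ψ j (S.x j) ∈ B.D (n - 1) ∧ ‖S.y (S.e j).1‖ = 1) ∨
      ∃ j', 1 ≤ j' ∧ j' < j ∧ S.ψ j (S.x j) = S.x j' ∧ (S.e j').2 = (S.e j).2 ∧
        S.y (S.e j').1 = trunc (‖S.y (S.e j).1‖ - 1) (S.y (S.e j).1) := by
  obtain ⟨hc, hk, hkn, hball⟩ := S.e_mem j hj hjI
  set c := (S.e j).1
  set k := (S.e j).2
  obtain ⟨hyZ, hyΔ⟩ := S.intValued_y c
  have hc1 := S.one_le_norm_y hc
  obtain ⟨γ, hγ⟩ := exists_abs_apply_eq_norm ((B.finite n (by linarith [S.two_le])).subset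
    Set.sdiff_subset) hyΔ (S.y_ne_zero hc)
  have hnorm : ‖trunc (‖S.y c‖ - 1) (S.y c)‖ = ‖S.y c‖ - 1 :=
    norm_trunc_eq (by linarith) (by linarith)
  have hψM := (S.ψ_x j hj hjI).1
  by_cases h0 : trunc (‖S.y c‖ - 1) (S.y c) = 0
  · refine Or.inl ⟨S.mem_D_of_restr_eq hψM (S.d_mem hk hkn) ?_, ?_⟩
    · rw [S.restr_ψ_x hj hjI, h0, add_zero]
    · rw [h0, norm_zero] at hnorm; linarith
  right
  obtain ⟨m, hm⟩ := hyZ γ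
  have hlevel : ‖S.y c‖ - 1 = ((|m| - 1 : ℤ) : ℝ) := by rw [← hγ, hm]; push_cast; rfl
  obtain ⟨c', hc'⟩ :=
    S.exists_y_eq (hlevel ▸ hyZ.trunc) fun γ hγ => trunc_apply_eq_zero (hyΔ γ hγ)
  have hc'1 : 1 ≤ c' := Nat.one_le_iff_ne_zero.2 fun h => h0 (by rw [← hc', h, S.y_zero])
  have hball' : restr (B.Γs n \ B.Γs (n - 1)) (S.d k) + S.y c' ∈
      quant '' suppBall (B.Γs n \ B.Γs (n - 1)) (B.s n) := by
    obtain ⟨-, -, hball⟩ := mem_quant_suppBall_iff.1 hball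
    refine mem_quant_suppBall_iff.2 ⟨((B.intValued_of_mem_D (S.d_mem hk hkn)).restr _).add
      (S.intValued_y c').1,
      fun γ hγ => by simp [restr_apply_of_notMem hγ, (S.intValued_y c').2 γ hγ], ?_⟩
    rw [hc']
    refine norm_add_trunc_le (by linarith) ?_ hball
    rw [← restr_restr Set.sdiff_subset]
    exact (norm_restr_le _ _).trans (S.norm_restr_le_of_mem_D (S.d_mem hk hkn))
  obtain ⟨j', hj', hj'I, hej'⟩ := S.e_surj (c', k) hc'1 hk hkn hball'
  have hxj' := S.x_spec j' hj' hj'I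
  have hψ : S.ψ j (S.x j) = S.x j' := B.injOn_restr_M n hψM hxj'.1 (by
    rw [S.restr_ψ_x hj hjI, S.restr_x hj' hj'I, hej', hc'])
  refine ⟨j', hj', ?_, hψ, by rw [hej'], by rw [hej', hc']⟩
  by_contra! hjj'
  have hcc' : c ≤ c' := by simpa [hej'] using S.e_fst_mono hj hjj' hj'I
  have := S.norm_y_mono _ _ hcc'
  rw [hc', hnorm] at this
  linarith

-- Up to `1`, the truncation level that `Ψ_{n,i}` leaves on the `Δ_n`-part: `‖y_c‖` for
-- `e_i = (c, k)`, and `0` for `Ψ_{n,0}`, which retracts all of `M_n` onto `D_{n-1}`.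
def level (i : ℕ) : ℝ := if i = 0 then 0 else ‖S.y (S.e i).1‖

lemma level_nonneg (i : ℕ) : 0 ≤ S.level i := by
  unfold level; split_ifs <;> positivity

lemma level_le_norm (hij : i < j) (hjI : j ≤ S.I) : S.level i ≤ ‖S.y (S.e j).1‖ := by
  unfold level
  split_ifs with hi
  · positivity
  · exact S.norm_y_mono _ _ (S.e_fst_mono (by omega) hij.le hjI)

lemma norm_le_level (hj : 1 ≤ j) (hji : j ≤ i) (hiI : i ≤ S.I) :
    ‖S.y (S.e j).1‖ ≤ S.level i := by
  rw [level, if_neg (by omega)]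
  exact S.norm_y_mono _ _ (S.e_fst_mono hj hji hiI)

lemma chain_apply_of_mem_D {z : Linf Γ} (hz : z ∈ B.D (n - 1)) : chain S.ψ i S.I z = z :=
  chain_apply_eq_self fun t ht htI => S.ψ_eq_self_of_mem_D (by omega) htI hz

lemma chain_x (hiI : i ≤ S.I) (hj : 1 ≤ j) (hjI : j ≤ S.I) :
    chain S.ψ i S.I (S.x j) ∈ B.M n ∧ ∃ h, 0 ≤ h ∧ S.level i - 1 ≤ h ∧ h ≤ S.level i ∧
      restr (B.Γs n) (chain S.ψ i S.I (S.x j)) =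
        restr (B.Γs n) (S.d (S.e j).2) + trunc h (S.y (S.e j).1) := by
  induction j using Nat.strong_induction_on with
  | _ j ih =>
    rcases le_or_gt j i with hji | hij
    · rw [chain_apply_eq_self fun t ht htI => S.ψ_x_of_lt hj (by omega) htI]
      refine ⟨(S.x_spec j hj hjI).1, S.level i, S.level_nonneg i, by linarith, le_rfl, ?_⟩
      rw [S.restr_x hj hjI, trunc_eq_self (S.norm_le_level hj hji hiI)]
    have hlevel := S.level_le_norm hij hjI
    have hc1 := S.one_le_norm_y (S.e_mem j hj hjI).1
    rcases S.ψ_x_mem_D_or_eq_x hj hjI with ⟨hD, hc⟩ | ⟨j', hj', hj'j, hψ, hk, hc'⟩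
    · rw [chain_apply_eq_chain_apply hij hjI (fun t ht htI => S.ψ_x_of_lt hj ht htI)
        (fun t ht htI => S.ψ_eq_self_of_mem_D (by omega) htI hD), S.chain_apply_of_mem_D hD]
      refine ⟨(S.ψ_x j hj hjI).1, ‖S.y (S.e j).1‖ - 1, by linarith, by linarith, ?_,
        S.restr_ψ_x hj hjI⟩
      linarith [S.level_nonneg i]
    · rw [chain_apply_eq_chain_apply hij hjI (fun t ht htI => S.ψ_x_of_lt hj ht htI)
        (fun t ht htI => hψ ▸ S.ψ_x_of_lt hj' (by omega) htI), hψ]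
      obtain ⟨hM, h, hh, hlo, hhi, hres⟩ := ih j' hj'j hj' (by omega)
      refine ⟨hM, min h (‖S.y (S.e j).1‖ - 1), le_min hh (by linarith), le_min hlo (by linarith),
        (min_le_left _ _).trans hhi, ?_⟩
      rw [hres, hk, hc', trunc_trunc hh (by linarith)]

lemma exists_restr_chain_eq (hiI : i ≤ S.I) {z : Linf Γ} (hz : z ∈ B.M n) :
    ∃ δ ∈ B.D (n - 1), restr (B.Γs (n - 1)) z = restr (B.Γs (n - 1)) δ ∧
      chain S.ψ i S.I z ∈ B.M n ∧ ∃ h, 0 ≤ h ∧ S.level i - 1 ≤ h ∧ h ≤ S.level i ∧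
        restr (B.Γs n) (chain S.ψ i S.I z) =
          restr (B.Γs n) δ + trunc h (restr (B.Γs n) z - restr (B.Γs n) δ) := by
  by_cases hzD : z ∈ B.D (n - 1)
  · rw [S.chain_apply_of_mem_D hzD]
    refine ⟨z, hzD, rfl, hz, S.level i, S.level_nonneg i, by linarith, le_rfl, ?_⟩
    rw [sub_self, trunc_zero_right, add_zero]
  obtain ⟨j, ⟨hj, hjI⟩, rfl⟩ : z ∈ S.x '' Set.Icc 1 S.I := S.image_x ▸ ⟨hz, hzD⟩
  obtain ⟨-, hk, hkn, -⟩ := S.e_mem j hj hjI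
  refine ⟨S.d (S.e j).2, S.d_mem hk hkn, ?_, ?_⟩
  · rw [← restr_restr S.Γs_pred_subset, S.restr_x hj hjI, restr_add,
      restr_restr S.Γs_pred_subset,
      restr_eq_zero fun γ hγ => (S.intValued_y _).2 γ fun h => h.2 hγ, add_zero]
  · rw [S.restr_x hj hjI, add_sub_cancel_left]
    exact S.chain_x hiI hj hjI

theorem lipschitz (hiI : i ≤ S.I) {z w : Linf Γ} (hz : z ∈ B.M n) (hw : w ∈ B.M n) :
    ‖chain S.ψ i S.I z - chain S.ψ i S.I w‖ ≤
      ((3 * (B.lam : ℝ) + 2) * (3 * (B.lam : ℝ) ^ 2 + 6 * (B.lam : ℝ) + 11)) * ‖z - w‖ := by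
  rcases eq_or_ne z w with rfl | hzw
  · simp
  have hzw1 : 1 ≤ ‖z - w‖ :=
    ((B.intValued_of_mem_M hz).sub (B.intValued_of_mem_M hw)).one_le_norm (sub_ne_zero.2 hzw)
  obtain ⟨δ, hδ, hzδ, hΦz, h, hh, hlo, hhi, hresz⟩ := S.exists_restr_chain_eq hiI hz
  obtain ⟨δ', hδ', hwδ', hΦw, h', hh', hlo', hhi', hresw⟩ := S.exists_restr_chain_eq hiI hw
  have hδδ' : ‖restr (B.Γs n) δ - restr (B.Γs n) δ'‖ ≤ B.lam * ‖z - w‖ + (2 * B.lam + 2) := by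
    grw [S.norm_restr_sub_restr_le_of_mem_D hδ hδ', ← hzδ, ← hwδ', ← restr_sub,
      norm_restr_le]
  have hres : ‖restr (B.Γs n) (chain S.ψ i S.I z) - restr (B.Γs n) (chain S.ψ i S.I w)‖ ≤
      1 + ‖z - w‖ + 2 * (B.lam * ‖z - w‖ + (2 * B.lam + 2)) := by
    have hhh' : |h - h'| ≤ 1 := abs_sub_le_iff.2 ⟨by linarith, by linarith⟩
    rw [hresz, hresw]
    grw [norm_add_trunc_sub_sub_le hh hh', ← restr_sub, norm_restr_le, hδδ', hhh']
  have hlam := B.one_le_cast_lam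
  grw [B.norm_sub_le_of_mem_M (by linarith [S.two_le]) hΦz hΦw, hres]
  have hconst : 4 * (B.lam : ℝ) ^ 2 + 7 * B.lam + 2 ≤ (4 * B.lam ^ 2 + 7 * B.lam + 2) * ‖z - w‖ :=
    le_mul_of_one_le_right (by positivity) hzw1
  nlinarith

end BD.RetractionData

theorem Psi_lipschitz_general (B : BD Γ) (n : ℕ) (hn : 2 ≤ n)
    (y : ℕ → Linf Γ) (hy0 : y 0 = 0) (hyinj : Function.Injective y)
    (hyrange : Set.range y =
      quant '' {z : Linf Γ | ∀ γ ∉ B.Γs n \ B.Γs (n - 1), z γ = 0})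
    (hymono : ∀ j₁ j₂, j₁ ≤ j₂ → ‖y j₁‖ ≤ ‖y j₂‖)
    (kn : ℕ) (d : ℕ → Linf Γ)
    (hd_range : d '' Set.Icc 1 kn = B.D (n - 1))
    (I : ℕ) (e : ℕ → ℕ × ℕ)
    (he_mem : ∀ i, 1 ≤ i → i ≤ I → 1 ≤ (e i).1 ∧ 1 ≤ (e i).2 ∧ (e i).2 ≤ kn ∧
      restr (B.Γs n \ B.Γs (n - 1)) (d (e i).2) + y (e i).1 ∈
        quant '' suppBall (B.Γs n \ B.Γs (n - 1)) (B.s n))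
    (he_surj : ∀ p : ℕ × ℕ, 1 ≤ p.1 → 1 ≤ p.2 → p.2 ≤ kn →
      restr (B.Γs n \ B.Γs (n - 1)) (d p.2) + y p.1 ∈
        quant '' suppBall (B.Γs n \ B.Γs (n - 1)) (B.s n) →
      ∃ i, 1 ≤ i ∧ i ≤ I ∧ e i = p)
    (he_lex : ∀ i₁ i₂, 1 ≤ i₁ → i₁ < i₂ → i₂ ≤ I →
      (e i₁).1 < (e i₂).1 ∨ ((e i₁).1 = (e i₂).1 ∧ (e i₁).2 < (e i₂).2))
    (x : ℕ → Linf Γ)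
    (hx : ∀ i, 1 ≤ i → i ≤ I → x i ∈ B.M n ∧
      restr (B.Γs n) (x i) =
        restr (B.Γs (n - 1)) (d (e i).2) +
          restr (B.Γs n \ B.Γs (n - 1)) (d (e i).2) + y (e i).1)
    (hx_range : x '' Set.Icc 1 I = B.M n \ B.D (n - 1))
    (ψ : ℕ → Linf Γ → Linf Γ)
    (hψ_val : ∀ i, 1 ≤ i → i ≤ I → ψ i (x i) ∈ B.M n ∧
      restr (B.Γs n) (ψ i (x i)) =
        restr (B.Γs (n - 1)) (d (e i).2) +
          restr (B.Γs n \ B.Γs (n - 1)) (d (e i).2) +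
          trunc (‖y (e i).1‖ - 1) (y (e i).1))
    (hψ_id : ∀ i, 1 ≤ i → i ≤ I →
      ∀ z ∈ B.D (n - 1) ∪ x '' Set.Icc 1 (i - 1), ψ i z = z)
    : ∀ i, i < I → ∀ z ∈ B.M n, ∀ w ∈ B.M n,
      ‖chain ψ i I z - chain ψ i I w‖ ≤
        ((3 * (B.lam : ℝ) + 2) * (3 * (B.lam : ℝ) ^ 2 + 6 * (B.lam : ℝ) + 11)) * ‖z - w‖ :=
  fun _ hi _ hz _ hw =>
    (⟨hn, y, hy0, hyinj, hyrange, hymono, kn, d, hd_range, I, e, he_mem, he_surj, he_lex, x, hx,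
      hx_range, ψ, hψ_val, hψ_id⟩ : B.RetractionData n).lipschitz hi.le hz hw

/-- Proposition (Step 3): every `Ψ_{n,i} = ψ_{n,i+1} ∘ ⋯ ∘ ψ_{n,i(n)}` is
`(3λ+2)(3λ²+6λ+11)`-Lipschitz on `M_n`. -/
theorem Psi_lipschitz (B : BD Γ) (n : ℕ) (hn : 2 ≤ n)
    (y : ℕ → Linf Γ) (hy0 : y 0 = 0) (hyinj : Function.Injective y)
    (hyrange : Set.range y =
      quant '' {z : Linf Γ | ∀ γ ∉ B.Γs n \ B.Γs (n - 1), z γ = 0})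
    (hymono : ∀ j₁ j₂, j₁ ≤ j₂ → ‖y j₁‖ ≤ ‖y j₂‖)
    (kn : ℕ) (d : ℕ → Linf Γ)
    (hd_inj : Set.InjOn d (Set.Icc 1 kn))
    (hd_range : d '' Set.Icc 1 kn = B.D (n - 1))
    (I : ℕ) (e : ℕ → ℕ × ℕ)
    (he_mem : ∀ i, 1 ≤ i → i ≤ I → 1 ≤ (e i).1 ∧ 1 ≤ (e i).2 ∧ (e i).2 ≤ kn ∧
      restr (B.Γs n \ B.Γs (n - 1)) (d (e i).2) + y (e i).1 ∈
        quant '' suppBall (B.Γs n \ B.Γs (n - 1)) (B.s n))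
    (he_surj : ∀ p : ℕ × ℕ, 1 ≤ p.1 → 1 ≤ p.2 → p.2 ≤ kn →
      restr (B.Γs n \ B.Γs (n - 1)) (d p.2) + y p.1 ∈
        quant '' suppBall (B.Γs n \ B.Γs (n - 1)) (B.s n) →
      ∃ i, 1 ≤ i ∧ i ≤ I ∧ e i = p)
    (he_lex : ∀ i₁ i₂, 1 ≤ i₁ → i₁ < i₂ → i₂ ≤ I →
      (e i₁).1 < (e i₂).1 ∨ ((e i₁).1 = (e i₂).1 ∧ (e i₁).2 < (e i₂).2))
    (x : ℕ → Linf Γ)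
    (hx : ∀ i, 1 ≤ i → i ≤ I → x i ∈ B.M n ∧
      restr (B.Γs n) (x i) =
        restr (B.Γs (n - 1)) (d (e i).2) +
          restr (B.Γs n \ B.Γs (n - 1)) (d (e i).2) + y (e i).1)
    (hx_range : x '' Set.Icc 1 I = B.M n \ B.D (n - 1))
    (ψ : ℕ → Linf Γ → Linf Γ)
    (hψ_val : ∀ i, 1 ≤ i → i ≤ I → ψ i (x i) ∈ B.M n ∧
      restr (B.Γs n) (ψ i (x i)) =
        restr (B.Γs (n - 1)) (d (e i).2) +
          restr (B.Γs n \ B.Γs (n - 1)) (d (e i).2) +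
          trunc (‖y (e i).1‖ - 1) (y (e i).1))
    (hψ_id : ∀ i, 1 ≤ i → i ≤ I →
      ∀ z ∈ B.D (n - 1) ∪ x '' Set.Icc 1 (i - 1), ψ i z = z)
    : ∀ i, i < I → ∀ z ∈ B.M n, ∀ w ∈ B.M n,
      ‖chain ψ i I z - chain ψ i I w‖ ≤
        ((3 * (B.lam : ℝ) + 2) * (3 * (B.lam : ℝ) ^ 2 + 6 * (B.lam : ℝ) + 11)) * ‖z - w‖ :=
  Psi_lipschitz_general B n hn y hy0 hyinj hyrange hymono kn d hd_range I e he_mem he_surj he_lex x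
    hx hx_range ψ hψ_val hψ_id
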